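/- arXiv:1010.0815 — 2 statements merged into one kernel-verified Lean document; each statement's English description precedes it below -/
import Mathlib

section
/- Let ℝ^n = ℝ^{n_1} × ... × ℝ^{n_j} and s = (s_1,...,s_j) ∈ ℝ^j with s_1 > n_1/2, ..., s_j > n_j/2. Then every u ∈ 𝓗^s(ℝ^n) has Fourier transform û ∈ L¹(ℝ^n); consequently u coincides (as a tempered distribution) with a continuous function on ℝ^n vanishing at infinity. -/
open MeasureTheory Real SchwartzMap Filter
open scoped ENNReal InnerProductSpace

noncomputable section

/-- The product space `ℝ^{n₁} × ⋯ × ℝ^{n_j}` realized as a Euclidean space. -/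
abbrev Euc {j : ℕ} (N : Fin j → ℕ) : Type :=
  EuclideanSpace ℝ ((l : Fin j) × Fin (N l))

/-- The total dimension `n = n₁ + ⋯ + n_j`. -/
def totalDim {j : ℕ} (N : Fin j → ℕ) : ℕ := ∑ l, N l

/-- The multi-order bracket `⟨⟨ξ⟩⟩^s = ∏ l ⟨ξ_l⟩^{s_l}`, where `⟨ξ_l⟩ = (1+|ξ_l|²)^{1/2}`. -/
def jbs {j : ℕ} {N : Fin j → ℕ} (s : Fin j → ℝ) (ξ : Euc N) : ℝ :=
  ∏ l, (1 + ∑ k, (ξ ⟨l, k⟩) ^ 2) ^ (s l / 2)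

/-- Tempered distributions on `Euc N`. -/
abbrev TD {j : ℕ} (N : Fin j → ℕ) : Type := SchwartzMap (Euc N) ℂ →L[ℝ] ℂ

/-- The (paper-convention) inverse Fourier transform
`𝓕⁻¹φ(ξ) = (2π)^{-n} ∫ e^{i⟨x,ξ⟩} φ(x) dx`. -/
def invFTfun {j : ℕ} {N : Fin j → ℕ} (φ : Euc N → ℂ) (ξ : Euc N) : ℂ :=
  (((2 * π) ^ totalDim N : ℝ))⁻¹ • ∫ x : Euc N, Complex.exp (Complex.I * ((⟪x, ξ⟫_ℝ : ℝ) : ℂ)) * φ x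

/-- `w` is the Fourier transform (convention `û(ξ) = ∫ e^{-i⟨x,ξ⟩}u(x)dx`) of the tempered
distribution `u`; equivalently, `u = 𝓕⁻¹ w` as distributions. -/
def IsFourierOf {j : ℕ} {N : Fin j → ℕ} (u : TD N) (w : Euc N → ℂ) : Prop :=
  ∀ φ : SchwartzMap (Euc N) ℂ, u φ = ∫ ξ : Euc N, w ξ * invFTfun (⇑φ) ξ

/-- `‖⟨⟨·⟩⟩^s w‖_{L²}` for a candidate Fourier transform `w`. -/
def hsNormOf {j : ℕ} {N : Fin j → ℕ} (s : Fin j → ℝ) (w : Euc N → ℂ) : ℝ≥0∞ :=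
  eLpNorm (fun ξ : Euc N => (jbs s ξ : ℂ) * w ξ) 2 volume

/-- `u ∈ 𝓗^s`:  `û` is a function with `⟨⟨·⟩⟩^s û ∈ L²`. -/
def MemHs {j : ℕ} {N : Fin j → ℕ} (s : Fin j → ℝ) (u : TD N) : Prop :=
  ∃ w, IsFourierOf u w ∧ MemLp (fun ξ : Euc N => (jbs s ξ : ℂ) * w ξ) 2 volume

/-- `‖u‖_{𝓗^s} = ‖⟨⟨·⟩⟩^s û‖_{L²}` (as an extended real; `∞` if `u ∉ 𝓗^s`). -/
def hsNorm {j : ℕ} {N : Fin j → ℕ} (s : Fin j → ℝ) (u : TD N) : ℝ≥0∞ :=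
  ⨅ (w : Euc N → ℂ) (_ : IsFourierOf u w), hsNormOf s w

/-- `w` is the Fourier transform of the product `g·u` : for every Schwartz `φ` and every
Schwartz representative `ψ` of `g·φ`, `⟨g·u, φ⟩ = u(ψ) = ⟨w, 𝓕⁻¹φ⟩`. -/
def MulFourierOf {j : ℕ} {N : Fin j → ℕ} (u : TD N) (g : Euc N → ℂ) (w : Euc N → ℂ) : Prop :=
  ∀ (φ ψ : SchwartzMap (Euc N) ℂ), (∀ x, ψ x = g x * φ x) →
    u ψ = ∫ ξ : Euc N, w ξ * invFTfun (⇑φ) ξ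

/-- The product `g·u` belongs to `𝓗^s`. -/
def MemHsMul {j : ℕ} {N : Fin j → ℕ} (s : Fin j → ℝ) (u : TD N) (g : Euc N → ℂ) : Prop :=
  ∃ w, MulFourierOf u g w ∧ MemLp (fun ξ : Euc N => (jbs s ξ : ℂ) * w ξ) 2 volume

/-- `y ↦ ‖u · τ_yχ‖_{𝓗^s}`. -/
def locNorm {j : ℕ} {N : Fin j → ℕ} (s : Fin j → ℝ) (u : TD N) (χ : Euc N → ℂ)
    (y : Euc N) : ℝ≥0∞ :=
  ⨅ (w : Euc N → ℂ) (_ : MulFourierOf u (fun x => χ (x - y)) w), hsNormOf s w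

/-- The Kato–Sobolev norm `‖u‖_{s,p,χ}`. -/
def kpNorm {j : ℕ} {N : Fin j → ℕ} (p : ℝ≥0∞) (s : Fin j → ℝ) (u : TD N)
    (χ : Euc N → ℂ) : ℝ≥0∞ :=
  if p = ∞ then ⨆ y, locNorm s u χ y
  else (∫⁻ y, locNorm s u χ y ^ p.toReal) ^ (1 / p.toReal)

/-- `u ∈ 𝓚_p^s` (with window `χ`). -/
def MemKp {j : ℕ} {N : Fin j → ℕ} (p : ℝ≥0∞) (s : Fin j → ℝ) (u : TD N)
    (χ : Euc N → ℂ) : Prop :=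
  (∀ y, MemHsMul s u (fun x => χ (x - y))) ∧ kpNorm p s u χ < ∞

/-- `χ ∈ C_c^∞`. -/
def IsCc {j : ℕ} {N : Fin j → ℕ} (χ : Euc N → ℂ) : Prop :=
  ContDiff ℝ (⊤ : ℕ∞) χ ∧ HasCompactSupport χ


/-! ### Auxiliary lemmas -/

section Aux

variable {j : ℕ} {N : Fin j → ℕ}

/-- Sigma-uncurry as a measurable equiv. -/
def sigmaME (N : Fin j → ℕ) :
    ((l : Fin j) → Fin (N l) → ℝ) ≃ᵐ (((l : Fin j) × Fin (N l)) → ℝ) where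
  toEquiv := (Equiv.piCurry fun _ _ => ℝ).symm
  measurable_toFun := measurable_pi_lambda _ fun p =>
    (measurable_pi_apply p.2).comp (measurable_pi_apply p.1)
  measurable_invFun := measurable_pi_lambda _ fun l =>
    measurable_pi_lambda _ fun k =>
      (measurable_pi_apply (⟨l, k⟩ : (l : Fin j) × Fin (N l)) : _)

theorem sigmaME_measurePreserving :
    MeasurePreserving (sigmaME N) volume volume := by
  refine ⟨(sigmaME N).measurable, ?_⟩
  rw [show (volume : Measure (((l : Fin j) × Fin (N l)) → ℝ)) = Measure.pi fun _ => volume from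
    volume_pi]
  refine (Measure.pi_eq fun t ht => ?_).symm
  rw [Measure.map_apply (sigmaME N).measurable (MeasurableSet.univ_pi ht)]
  have hpre : (sigmaME N) ⁻¹' (Set.pi Set.univ t) =
      Set.pi Set.univ fun l => Set.pi Set.univ fun k => t ⟨l, k⟩ := by
    ext y
    simp only [Set.mem_preimage, Set.mem_pi, Set.mem_univ, true_implies]
    constructor
    · intro h l k; exact h ⟨l, k⟩
    · intro h p; exact h p.1 p.2
  rw [hpre, volume_pi_pi]
  simp_rw [volume_pi_pi]
  rw [← Finset.univ_sigma_univ, Finset.prod_sigma]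

theorem integrable_block {m : ℕ} {r : ℝ} (hr : (m : ℝ) < 2 * r) :
    Integrable (fun z : Fin m → ℝ => (1 + ∑ k, z k ^ 2) ^ (-r)) volume := by
  have hg : AEStronglyMeasurable (fun z : Fin m → ℝ => (1 + ∑ k, z k ^ 2) ^ (-r)) volume := by
    apply Continuous.aestronglyMeasurable
    apply Continuous.rpow_const (by continuity)
    intro z; left; positivity
  rw [← (EuclideanSpace.volume_preserving_symm_measurableEquiv_toLp (ι := Fin m)).integrable_comp hg]
  have h0 : Integrable
      (fun x : EuclideanSpace ℝ (Fin m) => ((1 : ℝ) + ‖x‖ ^ 2) ^ (-(2 * r) / 2)) volume :=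
    integrable_rpow_neg_one_add_norm_sq (by rwa [finrank_euclideanSpace_fin])
  refine h0.congr (Filter.Eventually.of_forall fun x => ?_)
  show (1 + ‖x‖ ^ 2) ^ (-(2 * r) / 2)
      = (1 + ∑ k, ((MeasurableEquiv.toLp 2 (Fin m → ℝ)).symm x k) ^ 2) ^ (-r)
  rw [EuclideanSpace.norm_eq, Real.sq_sqrt (by positivity)]
  have h2 : -(2 * r) / 2 = -r := by ring
  rw [h2]
  congr 1
  simp [sq_abs]

theorem continuous_coord (p : (l : Fin j) × Fin (N l)) :
    Continuous fun ξ : Euc N => ξ p := (EuclideanSpace.proj p).continuous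

theorem integrable_prod_jap (s : Fin j → ℝ) (hs : ∀ l, (N l : ℝ) / 2 < s l) :
    Integrable (fun ξ : Euc N => ∏ l, (1 + ∑ k, (ξ ⟨l, k⟩) ^ 2) ^ (-(s l))) volume := by
  have hcont : Continuous fun ξ : Euc N => ∏ l, (1 + ∑ k, (ξ ⟨l, k⟩) ^ 2) ^ (-(s l)) := by
    apply continuous_finset_prod
    intro l _
    apply Continuous.rpow_const
    · exact continuous_const.add (continuous_finset_sum _ fun k _ =>
        (continuous_coord ⟨l, k⟩).pow 2)
    · intro ξ; left; positivity
  have hT := ((EuclideanSpace.volume_preserving_symm_measurableEquiv_toLp (ι := (l : Fin j) × Fin (N l))).symm).comp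
    (sigmaME_measurePreserving (N := N))
  rw [← hT.integrable_comp hcont.aestronglyMeasurable]
  exact Integrable.fintype_prod_dep
    (f := fun l (z : Fin (N l) → ℝ) => (1 + ∑ k, z k ^ 2) ^ (-(s l)))
    (fun l => integrable_block (by linarith [hs l]))

theorem jbs_pos (s : Fin j → ℝ) (ξ : Euc N) : 0 < jbs s ξ :=
  Finset.prod_pos fun l _ => Real.rpow_pos_of_pos (by positivity) _

theorem jbs_continuous (s : Fin j → ℝ) : Continuous (jbs (N := N) s) := by
  apply continuous_finset_prod
  intro l _
  apply Continuous.rpow_const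
  · exact continuous_const.add (continuous_finset_sum _ fun k _ =>
      (continuous_coord ⟨l, k⟩).pow 2)
  · intro ξ; left; positivity

theorem memL2_inv_jbs (s : Fin j → ℝ) (hs : ∀ l, (N l : ℝ) / 2 < s l) :
    MemLp (fun ξ : Euc N => (jbs s ξ)⁻¹) 2 volume := by
  have hmeas : AEStronglyMeasurable (fun ξ : Euc N => (jbs s ξ)⁻¹) volume :=
    ((jbs_continuous s).inv₀ fun ξ => (jbs_pos s ξ).ne').aestronglyMeasurable
  rw [memLp_two_iff_integrable_sq hmeas]
  have heq : (fun ξ : Euc N => ((jbs s ξ)⁻¹) ^ 2)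
      = fun ξ : Euc N => ∏ l, (1 + ∑ k, (ξ ⟨l, k⟩) ^ 2) ^ (-(s l)) := by
    funext ξ
    unfold jbs
    rw [← Finset.prod_inv_distrib, ← Finset.prod_pow]
    refine Finset.prod_congr rfl fun l _ => ?_
    have ha0 : (0 : ℝ) < 1 + ∑ k, (ξ ⟨l, k⟩) ^ 2 := by positivity
    rw [← Real.rpow_neg ha0.le, sq, ← Real.rpow_add ha0]
    congr 1
    ring
  rw [heq]
  exact integrable_prod_jap s hs

theorem memL2_inv_jbsC (s : Fin j → ℝ) (hs : ∀ l, (N l : ℝ) / 2 < s l) :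
    MemLp (fun ξ : Euc N => ((jbs s ξ : ℂ))⁻¹) 2 volume := by
  have h := MemLp.ofReal (K := ℂ) (memL2_inv_jbs s hs)
  rw [show (fun ξ : Euc N => ((jbs s ξ : ℂ))⁻¹)
      = fun ξ : Euc N => (((jbs s ξ)⁻¹ : ℝ) : ℂ) from
    funext fun ξ => (Complex.ofReal_inv _).symm]
  exact h

theorem integrable_uhat_aux (s : Fin j → ℝ) (hs : ∀ l, (N l : ℝ) / 2 < s l)
    (uhat : Euc N → ℂ)
    (hu : MemLp (fun ξ : Euc N => (jbs s ξ : ℂ) * uhat ξ) 2 volume) :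
    Integrable uhat volume := by
  have h121 : (1 : ℝ≥0∞) / 1 = 1 / 2 + 1 / 2 := by
    rw [ENNReal.div_add_div_same, one_add_one_eq_two,
      ENNReal.div_self two_ne_zero ENNReal.ofNat_ne_top, one_div_one]
  have hsmul := MemLp.smul (p := 2) (q := 2) (r := 1) hu (memL2_inv_jbsC s hs)
  rw [← memLp_one_iff_integrable]
  have heq : ((fun ξ : Euc N => ((jbs s ξ : ℂ))⁻¹)
      • fun ξ : Euc N => (jbs s ξ : ℂ) * uhat ξ) = uhat := by
    funext ξ
    simp only [Pi.smul_apply', Pi.smul_apply, smul_eq_mul]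
    exact inv_mul_cancel_left₀ (by exact_mod_cast (jbs_pos s ξ).ne') _
  rwa [heq] at hsmul

theorem norm_exp_I_mul_real (r : ℝ) : ‖Complex.exp (Complex.I * (r : ℂ))‖ = 1 := by
  rw [Complex.norm_exp]
  simp [Complex.mul_re]

end Aux

/-- if `s_l > n_l/2` for every `l`, then every `u ∈ 𝓗^s(ℝⁿ)` has an
integrable Fourier transform; consequently `u` coincides, as a tempered distribution,
with a continuous function vanishing at infinity. -/
theorem memHs_integrable_fourier_and_continuous (j : ℕ) (N : Fin j → ℕ) (s : Fin j → ℝ)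
    (hs : ∀ l, (N l : ℝ) / 2 < s l)
    (u : TD N) (uhat : Euc N → ℂ) (hFT : IsFourierOf u uhat)
    (hu : MemLp (fun ξ : Euc N => (jbs s ξ : ℂ) * uhat ξ) 2 volume) :
    Integrable uhat volume ∧
    ∃ f : Euc N → ℂ, Continuous f ∧ Tendsto f (cocompact (Euc N)) (nhds 0) ∧
      ∀ φ : SchwartzMap (Euc N) ℂ, u φ = ∫ x : Euc N, f x * φ x := by
  have hInt : Integrable uhat volume := integrable_uhat_aux s hs uhat hu
  have h_uhat_meas : AEStronglyMeasurable uhat volume := hInt.1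
  have hKcont : ∀ x : Euc N, Continuous fun v : Euc N =>
      Complex.exp (Complex.I * ((⟪v, x⟫_ℝ : ℝ) : ℂ)) := fun x =>
    Complex.continuous_exp.comp (continuous_const.mul
      (Complex.continuous_ofReal.comp (continuous_id.inner continuous_const)))
  have hKcont' : ∀ v : Euc N, Continuous fun x : Euc N =>
      Complex.exp (Complex.I * ((⟪v, x⟫_ℝ : ℝ) : ℂ)) := fun v =>
    Complex.continuous_exp.comp (continuous_const.mul
      (Complex.continuous_ofReal.comp (continuous_const.inner continuous_id)))
  have hGcont : Continuous fun x : Euc N =>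
      ∫ v : Euc N, Complex.exp (Complex.I * ((⟪v, x⟫_ℝ : ℝ) : ℂ)) * uhat v := by
    apply continuous_of_dominated (bound := fun v : Euc N => ‖uhat v‖)
    · exact fun x => ((hKcont x).aestronglyMeasurable).mul h_uhat_meas
    · intro x
      filter_upwards with v
      rw [norm_mul, norm_exp_I_mul_real, one_mul]
    · exact hInt.norm
    · filter_upwards with v
      exact (hKcont' v).mul continuous_const
  refine ⟨hInt, invFTfun uhat, ?_, ?_, ?_⟩
  · show Continuous fun ξ : Euc N => (((2 * π) ^ totalDim N : ℝ))⁻¹ •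
      ∫ x : Euc N, Complex.exp (Complex.I * ((⟪x, ξ⟫_ℝ : ℝ) : ℂ)) * uhat x
    exact hGcont.const_smul ((((2 * π) ^ totalDim N : ℝ))⁻¹)
  · -- Riemann–Lebesgue
    have hc0 : (-(2 * π)⁻¹ : ℝ) ≠ 0 := neg_ne_zero.mpr (inv_ne_zero (by positivity))
    have hm : Tendsto (fun x : Euc N => (-(2 * π)⁻¹ : ℝ) • x)
        (cocompact (Euc N)) (cocompact (Euc N)) :=
      (isProperMap_iff_tendsto_cocompact.mp
        (Homeomorph.smulOfNeZero (-(2 * π)⁻¹ : ℝ) hc0).isProperMap).2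
    have hRL := tendsto_integral_exp_inner_smul_cocompact (f := uhat) (V := Euc N)
    have hcomp := hRL.comp hm
    have key : (fun x : Euc N =>
          ∫ v : Euc N, Complex.exp (Complex.I * ((⟪v, x⟫_ℝ : ℝ) : ℂ)) * uhat v)
        = (fun w : Euc N => ∫ v : Euc N, Real.fourierChar (-⟪v, w⟫_ℝ) • uhat v) ∘
          (fun x : Euc N => (-(2 * π)⁻¹ : ℝ) • x) := by
      funext x
      simp only [Function.comp]
      refine integral_congr_ae (Filter.Eventually.of_forall fun v => ?_)
      beta_reduce
      rw [real_inner_smul_right, Circle.smul_def, Real.fourierChar_apply]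
      have h1 : 2 * π * -(-(2 * π)⁻¹ * ⟪v, x⟫_ℝ) = ⟪v, x⟫_ℝ := by
        field_simp
      rw [h1, smul_eq_mul, mul_comm Complex.I]
    have h0 : Tendsto (fun x : Euc N =>
        ∫ v : Euc N, Complex.exp (Complex.I * ((⟪v, x⟫_ℝ : ℝ) : ℂ)) * uhat v)
        (cocompact (Euc N)) (nhds 0) := by
      rw [key]; exact hcomp
    show Tendsto (fun ξ : Euc N => (((2 * π) ^ totalDim N : ℝ))⁻¹ •
      ∫ x : Euc N, Complex.exp (Complex.I * ((⟪x, ξ⟫_ℝ : ℝ) : ℂ)) * uhat x) _ _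
    simpa using h0.const_smul ((((2 * π) ^ totalDim N : ℝ))⁻¹)
  · -- the distributional identity, via Fubini
    intro φ
    rw [hFT φ]
    have hF : Integrable (Function.uncurry fun ξ x : Euc N =>
        uhat ξ * (Complex.exp (Complex.I * ((⟪x, ξ⟫_ℝ : ℝ) : ℂ)) * φ x))
        (volume.prod volume) := by
      have hbase : Integrable (fun z : Euc N × Euc N => uhat z.1 * φ z.2)
          (volume.prod volume) := hInt.mul_prod φ.integrable
      have hker : AEStronglyMeasurable
          (fun z : Euc N × Euc N => Complex.exp (Complex.I * ((⟪z.2, z.1⟫_ℝ : ℝ) : ℂ)))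
          (volume.prod volume) :=
        (Complex.continuous_exp.comp (continuous_const.mul
          (Complex.continuous_ofReal.comp
            (continuous_snd.inner continuous_fst)))).aestronglyMeasurable
      have h := hbase.bdd_mul (c := 1) hker (Filter.Eventually.of_forall fun z => le_of_eq (norm_exp_I_mul_real _))
      refine h.congr (Filter.Eventually.of_forall fun z => ?_)
      simp only [Function.uncurry]
      ring
    have hswap := MeasureTheory.integral_integral_swap (f := fun ξ x : Euc N =>
      uhat ξ * (Complex.exp (Complex.I * ((⟪x, ξ⟫_ℝ : ℝ) : ℂ)) * φ x)) hF
    calc ∫ ξ : Euc N, uhat ξ * invFTfun (⇑φ) ξ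
        = ∫ ξ : Euc N, (((2 * π) ^ totalDim N : ℝ))⁻¹ •
            ∫ x : Euc N, uhat ξ * (Complex.exp (Complex.I * ((⟪x, ξ⟫_ℝ : ℝ) : ℂ)) * φ x) := by
          refine integral_congr_ae (Filter.Eventually.of_forall fun ξ => ?_)
          show uhat ξ * ((((2 * π) ^ totalDim N : ℝ))⁻¹ •
              ∫ x : Euc N, Complex.exp (Complex.I * ((⟪x, ξ⟫_ℝ : ℝ) : ℂ)) * φ x) = _
          rw [mul_smul_comm]
          congr 1
          exact (integral_const_mul _ _).symm
      _ = (((2 * π) ^ totalDim N : ℝ))⁻¹ • ∫ ξ : Euc N,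
            ∫ x : Euc N, uhat ξ * (Complex.exp (Complex.I * ((⟪x, ξ⟫_ℝ : ℝ) : ℂ)) * φ x) :=
          integral_smul _ _
      _ = (((2 * π) ^ totalDim N : ℝ))⁻¹ • ∫ x : Euc N,
            ∫ ξ : Euc N, uhat ξ * (Complex.exp (Complex.I * ((⟪x, ξ⟫_ℝ : ℝ) : ℂ)) * φ x) := by
          rw [hswap]
      _ = (((2 * π) ^ totalDim N : ℝ))⁻¹ • ∫ x : Euc N,
            (∫ ξ : Euc N, Complex.exp (Complex.I * ((⟪ξ, x⟫_ℝ : ℝ) : ℂ)) * uhat ξ) * φ x := by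
          congr 1
          refine integral_congr_ae (Filter.Eventually.of_forall fun x => ?_)
          beta_reduce
          rw [← integral_mul_const]
          refine integral_congr_ae (Filter.Eventually.of_forall fun ξ => ?_)
          beta_reduce
          rw [real_inner_comm x ξ]
          ring
      _ = ∫ x : Euc N, invFTfun uhat x * φ x := by
          rw [← integral_smul]
          refine integral_congr_ae (Filter.Eventually.of_forall fun x => ?_)
          show (((2 * π) ^ totalDim N : ℝ))⁻¹ •
              ((∫ ξ : Euc N, Complex.exp (Complex.I * ((⟪ξ, x⟫_ℝ : ℝ) : ℂ)) * uhat ξ) * φ x) = _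
          rw [← smul_mul_assoc]
          rfl
end
end

section
/- Let s, t ∈ ℝ with s + t > n/2. For ε ∈ (0, s+t−n/2) put σ(ε) = min{s, t, s+t−n/2−ε}. Then for every ξ ∈ ℝ^n, (⟨·⟩^{-2s} ∗ ⟨·⟩^{-2t})(ξ) ≤ C(s,t,ε,n) ⟨ξ⟩^{-2σ(ε)}, where C(s,t,ε,n) = 2^{2σ(ε)+1}‖⟨·⟩^{-2(s+t−σ(ε))}‖_{L¹} if s,t ≥ 0, and C(s,t,ε,n) = 2^{|σ(ε)|}‖⟨·⟩^{-2(s+t)}‖_{L¹} if s < 0 or t < 0. -/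
open MeasureTheory Real

noncomputable section

lemma peetre_aux {E : Type*} [SeminormedAddCommGroup E] (a b : E) :
    1 + ‖a‖ ^ 2 ≤ 2 * ((1 + ‖a - b‖ ^ 2) * (1 + ‖b‖ ^ 2)) := by
  have h : ‖a‖ ≤ ‖a - b‖ + ‖b‖ := by simpa using norm_add_le (a - b) b
  have h1 : (0:ℝ) ≤ ‖a - b‖ := norm_nonneg _
  have h2 : (0:ℝ) ≤ ‖b‖ := norm_nonneg _
  have h3 : (0:ℝ) ≤ ‖a‖ := norm_nonneg _
  nlinarith [sq_nonneg (‖a - b‖ * ‖b‖), sq_nonneg (‖a - b‖ - ‖b‖)]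

lemma integrable_bracket (n : ℕ) {r : ℝ} (hr : (n:ℝ)/2 < r) :
    Integrable (fun x : EuclideanSpace ℝ (Fin n) => ((1:ℝ) + ‖x‖ ^ 2) ^ (-r)) := by
  have h : ((Module.finrank ℝ (EuclideanSpace ℝ (Fin n))) : ℝ) < 2 * r := by
    simp [finrank_euclideanSpace_fin]; linarith
  have := integrable_rpow_neg_one_add_norm_sq (E := EuclideanSpace ℝ (Fin n))
    (μ := volume) h
  convert this using 2 with x
  ring_nf

lemma cont_bracket (n : ℕ) (r : ℝ) :
    Continuous (fun x : EuclideanSpace ℝ (Fin n) => ((1:ℝ) + ‖x‖ ^ 2) ^ (-r)) := by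
  apply Continuous.rpow_const
  · fun_prop
  · intro x; left; positivity

set_option maxHeartbeats 1000000 in
/-- For `s + t > n/2` and `0 < ε < s + t - n/2`, writing
`σ(ε) = min {s, t, s + t - n/2 - ε}`, one has the pointwise bound
`(⟨·⟩^{-2s} ∗ ⟨·⟩^{-2t})(ξ) ≤ C(s,t,ε,n) ⟨ξ⟩^{-2σ(ε)}`, where
`C(s,t,ε,n) = 2^{2σ(ε)+1}‖⟨·⟩^{-2(s+t-σ(ε))}‖_{L¹}` if `s, t ≥ 0` and
`C(s,t,ε,n) = 2^{|σ(ε)|}‖⟨·⟩^{-2(s+t)}‖_{L¹}` if `s < 0` or `t < 0`.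
Here `⟨x⟩^{-2λ} = (1+|x|²)^{-λ}`. -/
theorem bracket_convolution_le_sigma (n : ℕ) (s t ε σ : ℝ)
    (hst : (n : ℝ) / 2 < s + t) (hε0 : 0 < ε) (hε1 : ε < s + t - (n : ℝ) / 2)
    (hσ : σ = min s (min t (s + t - (n : ℝ) / 2 - ε))) (ξ : EuclideanSpace ℝ (Fin n)) :
    (∫ η : EuclideanSpace ℝ (Fin n),
        (1 + ‖ξ - η‖ ^ 2) ^ (-s) * (1 + ‖η‖ ^ 2) ^ (-t)) ≤
      (if 0 ≤ s ∧ 0 ≤ t then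
          (2 : ℝ) ^ (2 * σ + 1) *
            ∫ η : EuclideanSpace ℝ (Fin n), (1 + ‖η‖ ^ 2) ^ (-(s + t - σ))
        else
          (2 : ℝ) ^ |σ| *
            ∫ η : EuclideanSpace ℝ (Fin n), (1 + ‖η‖ ^ 2) ^ (-(s + t))) *
        (1 + ‖ξ‖ ^ 2) ^ (-σ) := by
  have hX0 : (0:ℝ) < 1 + ‖ξ‖ ^ 2 := by positivity
  have hX1 : (1:ℝ) ≤ 1 + ‖ξ‖ ^ 2 := by nlinarith [sq_nonneg ‖ξ‖]
  have hσs : σ ≤ s := hσ ▸ min_le_left _ _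
  have hσt : σ ≤ t := hσ ▸ le_trans (min_le_right _ _) (min_le_left _ _)
  have hσ3 : σ ≤ s + t - (n:ℝ)/2 - ε := hσ ▸ le_trans (min_le_right _ _) (min_le_right _ _)
  have hf_cont : Continuous fun η : EuclideanSpace ℝ (Fin n) =>
      (1 + ‖ξ - η‖ ^ 2) ^ (-s) * (1 + ‖η‖ ^ 2) ^ (-t) :=
    ((cont_bracket n s).comp (continuous_const.sub continuous_id)).mul (cont_bracket n t)
  by_cases hcase : 0 ≤ s ∧ 0 ≤ t
  · rw [if_pos hcase]
    obtain ⟨hs, ht⟩ := hcase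
    have hσ0 : 0 ≤ σ := by rw [hσ]; exact le_min hs (le_min ht (by linarith))
    set g : EuclideanSpace ℝ (Fin n) → ℝ := fun η => (1 + ‖η‖ ^ 2) ^ (-(s + t - σ)) with hgdef
    have hg_int : Integrable g := integrable_bracket n (by linarith)
    have hgξ_int : Integrable fun η => g (ξ - η) := (integrable_comp_sub_left g ξ).2 hg_int
    have h4 : (4:ℝ) ^ σ = 2 ^ (2 * σ) := by
      rw [show (4:ℝ) = 2 ^ (2:ℕ) by norm_num, ← Real.rpow_natCast 2 2,
        ← Real.rpow_mul (by norm_num)]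
      norm_num
    have key : ∀ η, (1 + ‖ξ - η‖ ^ 2) ^ (-s) * (1 + ‖η‖ ^ 2) ^ (-t) ≤
        2 ^ (2 * σ) * (1 + ‖ξ‖ ^ 2) ^ (-σ) * (g (ξ - η) + g η) := by
      intro η
      set A := 1 + ‖ξ - η‖ ^ 2 with hA
      set B := 1 + ‖η‖ ^ 2 with hB
      have hA0 : (0:ℝ) < A := by positivity
      have hB0 : (0:ℝ) < B := by positivity
      have hsum : 1 + ‖ξ‖ ^ 2 ≤ 2 * (A + B) := by
        have h : ‖ξ‖ ≤ ‖ξ - η‖ + ‖η‖ := by simpa using norm_add_le (ξ - η) η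
        rw [hA, hB]
        nlinarith [norm_nonneg (ξ - η), norm_nonneg η, norm_nonneg ξ,
          sq_nonneg (‖ξ - η‖ - ‖η‖)]
      have hgA : g (ξ - η) = A ^ (-(s + t - σ)) := rfl
      have hgB : g η = B ^ (-(s + t - σ)) := rfl
      have e4 : ((1 + ‖ξ‖ ^ 2) / 4) ^ (-σ) = 2 ^ (2 * σ) * (1 + ‖ξ‖ ^ 2) ^ (-σ) := by
        rw [Real.div_rpow hX0.le (by norm_num), Real.rpow_neg (by norm_num : (0:ℝ) ≤ 4),
          div_inv_eq_mul, mul_comm, h4]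
      rcases le_total B A with hBA | hAB
      · have hXA : (1 + ‖ξ‖ ^ 2) / 4 ≤ A := by nlinarith
        have e1 : A ^ (-s) = A ^ (-σ) * A ^ (-(s - σ)) := by
          rw [← Real.rpow_add hA0]; congr 1; ring
        have e2 : A ^ (-σ) ≤ ((1 + ‖ξ‖ ^ 2) / 4) ^ (-σ) :=
          Real.rpow_le_rpow_of_nonpos (by linarith) hXA (by linarith)
        have e3 : A ^ (-(s - σ)) ≤ B ^ (-(s - σ)) :=
          Real.rpow_le_rpow_of_nonpos hB0 hBA (by linarith)
        have e5 : B ^ (-(s - σ)) * B ^ (-t) = B ^ (-(s + t - σ)) := by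
          rw [← Real.rpow_add hB0]; congr 1; ring
        calc A ^ (-s) * B ^ (-t) = A ^ (-σ) * (A ^ (-(s - σ)) * B ^ (-t)) := by
              rw [e1]; ring
          _ ≤ ((1 + ‖ξ‖ ^ 2) / 4) ^ (-σ) * (B ^ (-(s - σ)) * B ^ (-t)) := by
              apply mul_le_mul e2 _ (by positivity) (by positivity)
              exact mul_le_mul_of_nonneg_right e3 (by positivity)
          _ = 2 ^ (2 * σ) * (1 + ‖ξ‖ ^ 2) ^ (-σ) * B ^ (-(s + t - σ)) := by
              rw [e4, e5]
          _ ≤ 2 ^ (2 * σ) * (1 + ‖ξ‖ ^ 2) ^ (-σ) * (g (ξ - η) + g η) := by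
              apply mul_le_mul_of_nonneg_left _ (by positivity)
              rw [hgA, hgB]
              have h1 := Real.rpow_nonneg hA0.le (-(s + t - σ))
              have h2 := Real.rpow_nonneg hB0.le (-(s + t - σ))
              linarith
      · have hXB : (1 + ‖ξ‖ ^ 2) / 4 ≤ B := by nlinarith
        have e1 : B ^ (-t) = B ^ (-σ) * B ^ (-(t - σ)) := by
          rw [← Real.rpow_add hB0]; congr 1; ring
        have e2 : B ^ (-σ) ≤ ((1 + ‖ξ‖ ^ 2) / 4) ^ (-σ) :=
          Real.rpow_le_rpow_of_nonpos (by linarith) hXB (by linarith)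
        have e3 : B ^ (-(t - σ)) ≤ A ^ (-(t - σ)) :=
          Real.rpow_le_rpow_of_nonpos hA0 hAB (by linarith)
        have e5 : A ^ (-(t - σ)) * A ^ (-s) = A ^ (-(s + t - σ)) := by
          rw [← Real.rpow_add hA0]; congr 1; ring
        calc A ^ (-s) * B ^ (-t) = B ^ (-σ) * (B ^ (-(t - σ)) * A ^ (-s)) := by
              rw [e1]; ring
          _ ≤ ((1 + ‖ξ‖ ^ 2) / 4) ^ (-σ) * (A ^ (-(t - σ)) * A ^ (-s)) := by
              apply mul_le_mul e2 _ (by positivity) (by positivity)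
              exact mul_le_mul_of_nonneg_right e3 (by positivity)
          _ = 2 ^ (2 * σ) * (1 + ‖ξ‖ ^ 2) ^ (-σ) * A ^ (-(s + t - σ)) := by
              rw [e4, e5]
          _ ≤ 2 ^ (2 * σ) * (1 + ‖ξ‖ ^ 2) ^ (-σ) * (g (ξ - η) + g η) := by
              apply mul_le_mul_of_nonneg_left _ (by positivity)
              rw [hgA, hgB]
              have h1 := Real.rpow_nonneg hA0.le (-(s + t - σ))
              have h2 := Real.rpow_nonneg hB0.le (-(s + t - σ))
              linarith
    have hRHS_int : Integrable fun η : EuclideanSpace ℝ (Fin n) =>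
        2 ^ (2 * σ) * (1 + ‖ξ‖ ^ 2) ^ (-σ) * (g (ξ - η) + g η) :=
      (hgξ_int.add hg_int).const_mul _
    have hf_int : Integrable fun η : EuclideanSpace ℝ (Fin n) =>
        (1 + ‖ξ - η‖ ^ 2) ^ (-s) * (1 + ‖η‖ ^ 2) ^ (-t) := by
      refine hRHS_int.mono' hf_cont.aestronglyMeasurable (ae_of_all _ fun η => ?_)
      rw [Real.norm_eq_abs, abs_of_nonneg (by positivity)]
      exact key η
    calc (∫ η : EuclideanSpace ℝ (Fin n),
            (1 + ‖ξ - η‖ ^ 2) ^ (-s) * (1 + ‖η‖ ^ 2) ^ (-t))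
        ≤ ∫ η : EuclideanSpace ℝ (Fin n),
            2 ^ (2 * σ) * (1 + ‖ξ‖ ^ 2) ^ (-σ) * (g (ξ - η) + g η) :=
          integral_mono hf_int hRHS_int key
      _ = 2 ^ (2 * σ) * (1 + ‖ξ‖ ^ 2) ^ (-σ) *
            ((∫ η, g (ξ - η)) + ∫ η, g η) := by
          rw [integral_const_mul (2 ^ (2 * σ) * (1 + ‖ξ‖ ^ 2) ^ (-σ))
            (fun η => g (ξ - η) + g η), integral_add hgξ_int hg_int]
      _ = 2 ^ (2 * σ) * (1 + ‖ξ‖ ^ 2) ^ (-σ) * (2 * ∫ η, g η) := by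
          rw [integral_sub_left_eq_self g volume ξ]; ring
      _ = 2 ^ (2 * σ + 1) * (∫ η, g η) * (1 + ‖ξ‖ ^ 2) ^ (-σ) := by
          rw [Real.rpow_add (by norm_num : (0:ℝ) < 2), Real.rpow_one]; ring
  · rw [if_neg hcase]
    set g : EuclideanSpace ℝ (Fin n) → ℝ := fun η => (1 + ‖η‖ ^ 2) ^ (-(s + t)) with hgdef
    have hg_int : Integrable g := integrable_bracket n (by linarith)
    have hgξ_int : Integrable fun η => g (ξ - η) := (integrable_comp_sub_left g ξ).2 hg_int
    have hg_nonneg : 0 ≤ ∫ η, g η := integral_nonneg fun η => by positivity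
    have main : ∃ c : ℝ, σ ≤ c ∧ c < 0 ∧
        (∫ η : EuclideanSpace ℝ (Fin n),
          (1 + ‖ξ - η‖ ^ 2) ^ (-s) * (1 + ‖η‖ ^ 2) ^ (-t)) ≤
        2 ^ (-c) * (1 + ‖ξ‖ ^ 2) ^ (-c) * ∫ η, g η := by
      rcases not_and_or.1 hcase with hs | ht
      · rw [not_le] at hs
        refine ⟨s, hσs, hs, ?_⟩
        have key : ∀ η, (1 + ‖ξ - η‖ ^ 2) ^ (-s) * (1 + ‖η‖ ^ 2) ^ (-t) ≤
            2 ^ (-s) * (1 + ‖ξ‖ ^ 2) ^ (-s) * g η := by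
          intro η
          set A := 1 + ‖ξ - η‖ ^ 2 with hA
          set B := 1 + ‖η‖ ^ 2 with hB
          have hA0 : (0:ℝ) < A := by positivity
          have hB0 : (0:ℝ) < B := by positivity
          have hpeetre : A ≤ 2 * ((1 + ‖ξ‖ ^ 2) * B) := by
            have := peetre_aux (ξ - η) (-η)
            simpa [sub_neg_eq_add, sub_add_cancel, norm_neg] using this
          have e1 : A ^ (-s) ≤ (2 * ((1 + ‖ξ‖ ^ 2) * B)) ^ (-s) :=
            Real.rpow_le_rpow hA0.le hpeetre (by linarith)
          have e2 : (2 * ((1 + ‖ξ‖ ^ 2) * B)) ^ (-s)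
              = 2 ^ (-s) * ((1 + ‖ξ‖ ^ 2) ^ (-s) * B ^ (-s)) := by
            rw [Real.mul_rpow (by norm_num) (by positivity),
              Real.mul_rpow hX0.le hB0.le]
          have e3 : B ^ (-s) * B ^ (-t) = B ^ (-(s + t)) := by
            rw [← Real.rpow_add hB0]; congr 1; ring
          have hgB : g η = B ^ (-(s + t)) := rfl
          calc A ^ (-s) * B ^ (-t)
              ≤ (2 ^ (-s) * ((1 + ‖ξ‖ ^ 2) ^ (-s) * B ^ (-s))) * B ^ (-t) := by
                rw [← e2]
                exact mul_le_mul_of_nonneg_right e1 (by positivity)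
            _ = 2 ^ (-s) * (1 + ‖ξ‖ ^ 2) ^ (-s) * (B ^ (-s) * B ^ (-t)) := by ring
            _ = 2 ^ (-s) * (1 + ‖ξ‖ ^ 2) ^ (-s) * g η := by rw [e3, hgB]
        have hRHS_int : Integrable fun η : EuclideanSpace ℝ (Fin n) =>
            2 ^ (-s) * (1 + ‖ξ‖ ^ 2) ^ (-s) * g η := hg_int.const_mul _
        have hf_int : Integrable fun η : EuclideanSpace ℝ (Fin n) =>
            (1 + ‖ξ - η‖ ^ 2) ^ (-s) * (1 + ‖η‖ ^ 2) ^ (-t) := by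
          refine hRHS_int.mono' hf_cont.aestronglyMeasurable (ae_of_all _ fun η => ?_)
          rw [Real.norm_eq_abs, abs_of_nonneg (by positivity)]
          exact key η
        calc (∫ η : EuclideanSpace ℝ (Fin n),
                (1 + ‖ξ - η‖ ^ 2) ^ (-s) * (1 + ‖η‖ ^ 2) ^ (-t))
            ≤ ∫ η : EuclideanSpace ℝ (Fin n),
                2 ^ (-s) * (1 + ‖ξ‖ ^ 2) ^ (-s) * g η :=
              integral_mono hf_int hRHS_int key
          _ = 2 ^ (-s) * (1 + ‖ξ‖ ^ 2) ^ (-s) * ∫ η, g η :=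
              integral_const_mul (2 ^ (-s) * (1 + ‖ξ‖ ^ 2) ^ (-s)) g
      · rw [not_le] at ht
        refine ⟨t, hσt, ht, ?_⟩
        have key : ∀ η, (1 + ‖ξ - η‖ ^ 2) ^ (-s) * (1 + ‖η‖ ^ 2) ^ (-t) ≤
            2 ^ (-t) * (1 + ‖ξ‖ ^ 2) ^ (-t) * g (ξ - η) := by
          intro η
          set A := 1 + ‖ξ - η‖ ^ 2 with hA
          set B := 1 + ‖η‖ ^ 2 with hB
          have hA0 : (0:ℝ) < A := by positivity
          have hB0 : (0:ℝ) < B := by positivity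
          have hpeetre : B ≤ 2 * ((1 + ‖ξ‖ ^ 2) * A) := by
            have := peetre_aux η (η - ξ)
            simpa [sub_sub_cancel, norm_sub_rev] using this
          have e1 : B ^ (-t) ≤ (2 * ((1 + ‖ξ‖ ^ 2) * A)) ^ (-t) :=
            Real.rpow_le_rpow hB0.le hpeetre (by linarith)
          have e2 : (2 * ((1 + ‖ξ‖ ^ 2) * A)) ^ (-t)
              = 2 ^ (-t) * ((1 + ‖ξ‖ ^ 2) ^ (-t) * A ^ (-t)) := by
            rw [Real.mul_rpow (by norm_num) (by positivity),
              Real.mul_rpow hX0.le hA0.le]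
          have e3 : A ^ (-s) * A ^ (-t) = A ^ (-(s + t)) := by
            rw [← Real.rpow_add hA0]; congr 1; ring
          have hgA : g (ξ - η) = A ^ (-(s + t)) := rfl
          calc A ^ (-s) * B ^ (-t)
              ≤ A ^ (-s) * (2 ^ (-t) * ((1 + ‖ξ‖ ^ 2) ^ (-t) * A ^ (-t))) := by
                rw [← e2]
                exact mul_le_mul_of_nonneg_left e1 (by positivity)
            _ = 2 ^ (-t) * (1 + ‖ξ‖ ^ 2) ^ (-t) * (A ^ (-s) * A ^ (-t)) := by ring
            _ = 2 ^ (-t) * (1 + ‖ξ‖ ^ 2) ^ (-t) * g (ξ - η) := by rw [e3, hgA]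
        have hRHS_int : Integrable fun η : EuclideanSpace ℝ (Fin n) =>
            2 ^ (-t) * (1 + ‖ξ‖ ^ 2) ^ (-t) * g (ξ - η) := hgξ_int.const_mul _
        have hf_int : Integrable fun η : EuclideanSpace ℝ (Fin n) =>
            (1 + ‖ξ - η‖ ^ 2) ^ (-s) * (1 + ‖η‖ ^ 2) ^ (-t) := by
          refine hRHS_int.mono' hf_cont.aestronglyMeasurable (ae_of_all _ fun η => ?_)
          rw [Real.norm_eq_abs, abs_of_nonneg (by positivity)]
          exact key η
        calc (∫ η : EuclideanSpace ℝ (Fin n),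
                (1 + ‖ξ - η‖ ^ 2) ^ (-s) * (1 + ‖η‖ ^ 2) ^ (-t))
            ≤ ∫ η : EuclideanSpace ℝ (Fin n),
                2 ^ (-t) * (1 + ‖ξ‖ ^ 2) ^ (-t) * g (ξ - η) :=
              integral_mono hf_int hRHS_int key
          _ = 2 ^ (-t) * (1 + ‖ξ‖ ^ 2) ^ (-t) * ∫ η, g (ξ - η) :=
              integral_const_mul (2 ^ (-t) * (1 + ‖ξ‖ ^ 2) ^ (-t)) (fun η => g (ξ - η))
          _ = 2 ^ (-t) * (1 + ‖ξ‖ ^ 2) ^ (-t) * ∫ η, g η := by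
              rw [integral_sub_left_eq_self g volume ξ]
    obtain ⟨c, hc1, hc2, hkey⟩ := main
    have hσneg : σ < 0 := lt_of_le_of_lt hc1 hc2
    have habs : |σ| = -σ := abs_of_neg hσneg
    refine le_trans hkey ?_
    rw [habs]
    have b1 : (2:ℝ) ^ (-c) ≤ 2 ^ (-σ) :=
      Real.rpow_le_rpow_of_exponent_le (by norm_num) (by linarith)
    have b2 : (1 + ‖ξ‖ ^ 2) ^ (-c) ≤ (1 + ‖ξ‖ ^ 2) ^ (-σ) :=
      Real.rpow_le_rpow_of_exponent_le hX1 (by linarith)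
    calc 2 ^ (-c) * (1 + ‖ξ‖ ^ 2) ^ (-c) * ∫ η, g η
        ≤ 2 ^ (-σ) * (1 + ‖ξ‖ ^ 2) ^ (-σ) * ∫ η, g η := by
          apply mul_le_mul_of_nonneg_right _ hg_nonneg
          exact mul_le_mul b1 b2 (by positivity) (by positivity)
      _ = 2 ^ (-σ) * (∫ η, g η) * (1 + ‖ξ‖ ^ 2) ^ (-σ) := by ring
end
end
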